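/- There is no integer r satisfying simultaneously r < n - m + 1 and r > n - m. Consequently, if s > 0 and r > 0 are integers, the product ∏_{k=1}^{r} 1/Γ(n-m-k+1) · ∏_{j=1}^{s} 1/Γ(m-(n-r)-j+1) (with 1/Γ the entire reciprocal Gamma) is zero for all integers n, m ≥ 0. -/
import Mathlib


open Real Finset

/-- No integer `r` satisfies both `r < n - m + 1` and `r > n - m`; consequently,
for `r > 0` and `s > 0`, the product of reciprocal Gamma factors arising in the
volume of the Stiefel supermanifold `V_{r|s}(ℂ^{n|m})`,
`∏_{k=1}^{r} 1/Γ(n-m-k+1) · ∏_{j=1}^{s} 1/Γ(m-(n-r)-j+1)`,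
vanishes (with `1/Γ` the entire reciprocal Gamma function). -/
theorem stiefel_volume_vanishes (n m : ℕ) (r s : ℕ) (hr : 0 < r) (hs : 0 < s) :
    (¬ ∃ t : ℤ, t < (n : ℤ) - m + 1 ∧ (n : ℤ) - m < t) ∧
      (∏ k ∈ Finset.Icc 1 r, (1 / Real.Gamma ((n : ℝ) - m - k + 1))) *
        (∏ j ∈ Finset.Icc 1 s, (1 / Real.Gamma ((m : ℝ) - ((n : ℝ) - r) - j + 1))) = 0 := by
  constructor
  · rintro ⟨t, h1, h2⟩; omega
  · rcases le_or_gt (m + r) n with h | h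
    · -- second product vanishes at j = 1
      apply mul_eq_zero_of_right
      apply Finset.prod_eq_zero (Finset.mem_Icc.mpr ⟨le_refl 1, hs⟩)
      have : (m : ℝ) - ((n : ℝ) - r) - (1 : ℕ) + 1 = -((n - m - r : ℕ) : ℝ) := by
        push_cast [Nat.cast_sub (show r ≤ n - m by omega), Nat.cast_sub (show m ≤ n by omega)]
        ring
      rw [this, Real.Gamma_neg_nat_eq_zero, one_div, inv_zero]
    · rcases le_or_gt m n with hmn | hmn
      · -- first product vanishes at k = n - m + 1
        apply mul_eq_zero_of_left
        apply Finset.prod_eq_zero (Finset.mem_Icc.mpr ⟨by omega, by omega⟩ :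
          n - m + 1 ∈ Finset.Icc 1 r)
        have : (n : ℝ) - m - ((n - m + 1 : ℕ) : ℝ) + 1 = -((0 : ℕ) : ℝ) := by
          push_cast [Nat.cast_sub hmn]; ring
        rw [this, Real.Gamma_neg_nat_eq_zero, one_div, inv_zero]
      · -- first product vanishes at k = 1
        apply mul_eq_zero_of_left
        apply Finset.prod_eq_zero (Finset.mem_Icc.mpr ⟨le_refl 1, hr⟩)
        have : (n : ℝ) - m - (1 : ℕ) + 1 = -((m - n : ℕ) : ℝ) := by
          push_cast [Nat.cast_sub hmn.le]; ring
        rw [this, Real.Gamma_neg_nat_eq_zero, one_div, inv_zero]
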